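/- arXiv:2306.03479 — 2 statements merged into one kernel-verified Lean document; each statement's English description precedes it below -/
import Mathlib

section
/- Refined lower tail fluctuation bound for heavy tails: fix an integer d ≥ 3 and α ∈ (0,2]. Then for every constant τ with max{0, 1−α} < τ < 1, the probability P( λ₁(X) ≤ (log n)^{1/α} − (log n)^{τ/α} ) tends to 0 as n → ∞ (along integers n > d with nd even). -/
open MeasureTheory ProbabilityTheory Filter Real
open scoped ENNReal NNReal

noncomputable section

instance matrixMeasurableSpace {m n α : Type*} [MeasurableSpace α] :
    MeasurableSpace (Matrix m n α) :=
  inferInstanceAs (MeasurableSpace (m → n → α))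

/-- The largest eigenvalue of a real square matrix: the supremum of its real eigenvalues. -/
def lam1 {n : ℕ} (M : Matrix (Fin n) (Fin n) ℝ) : ℝ :=
  sSup {r : ℝ | ∃ v : Fin n → ℝ, v ≠ 0 ∧ M.mulVec v = r • v}

/-- The set of adjacency matrices of simple `d`-regular graphs on `n` vertices:
symmetric 0-1 matrices with zero diagonal and all row sums equal to `d`. -/
def RegAdj (n d : ℕ) : Set (Matrix (Fin n) (Fin n) ℝ) :=
  {M | M.IsSymm ∧ (∀ i, M i i = 0) ∧ (∀ i j, M i j = 0 ∨ M i j = 1) ∧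
    ∀ i, (∑ j, M i j) = (d : ℝ)}

/-- A Weibull distribution with shape parameter `α` and constants `C₁ C₂`. -/
def IsWeibull (α C₁ C₂ : ℝ) (μ : Measure ℝ) : Prop :=
  IsProbabilityMeasure μ ∧
  ∀ t : ℝ, 1 ≤ t →
    ENNReal.ofReal (C₁ * Real.exp (-t ^ α) / 2) ≤ μ {x | t ≤ x} ∧
    μ {x | t ≤ x} ≤ ENNReal.ofReal (C₂ * Real.exp (-t ^ α) / 2) ∧
    ENNReal.ofReal (C₁ * Real.exp (-t ^ α) / 2) ≤ μ {x | x ≤ -t} ∧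
    μ {x | x ≤ -t} ≤ ENNReal.ofReal (C₂ * Real.exp (-t ^ α) / 2)

/-- The weighted random `d`-regular graph model: `A` is uniformly distributed on the set of
adjacency matrices of simple `d`-regular graphs on `n` vertices, `W` is a symmetric random
matrix with zero diagonal whose upper-triangular entries are i.i.d. with common law `μ`
(a Weibull law with shape parameter `α` and constants `C₁ C₂`), and `W` is independent
of `A`. -/
def WRRGModel (d : ℕ) (α C₁ C₂ : ℝ) {n : ℕ} {Ω : Type*} [MeasurableSpace Ω]
    (P : Measure Ω) (A W : Ω → Matrix (Fin n) (Fin n) ℝ) (μ : Measure ℝ) : Prop :=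
  IsProbabilityMeasure P ∧ Measurable A ∧ Measurable W ∧
  (∀ ω, A ω ∈ RegAdj n d) ∧
  (∀ M ∈ RegAdj n d, P {ω | A ω = M} = ((RegAdj n d).ncard : ℝ≥0∞)⁻¹) ∧
  (∀ ω, (W ω).IsSymm) ∧ (∀ ω i, W ω i i = 0) ∧
  IsWeibull α C₁ C₂ μ ∧
  (∀ i j : Fin n, i < j → Measure.map (fun ω => W ω i j) P = μ) ∧
  iIndepFun
    (fun (p : {p : Fin n × Fin n // p.1 < p.2}) (ω : Ω) => W ω p.1.1 p.1.2) P ∧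
  IndepFun A W P

/-! For every edge `i < j` of the graph, the test vector `eᵢ + eⱼ` has Rayleigh quotient
`Xᵢⱼ`, so `λ₁(X) ≤ t` forces every edge weight to be at most `t`. A `d`-regular graph has at
least `n / 2` edges, and given `A` their weights are independent, so the probability is at most
`P(W ≤ t) ^ (n / 2) ≤ exp (-(n / 2) P(W ≥ u))` for any `u > t`. With `L = log n`,
`t = L ^ (1/α) - L ^ (τ/α)` and `u = L ^ (1/α) - L ^ (τ/α) / 2` one has
`u ^ α ≤ L - c L ^ ((α + τ - 1)/α)`, hence `n P(W ≥ u) ≥ C exp (c L ^ ((α + τ - 1)/α)) → ∞`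
because `τ > 1 - α`. -/

open Finset Matrix Topology

section Matrix

variable {n : ℕ}

lemma lam1_eq_sSup_spectrum (M : Matrix (Fin n) (Fin n) ℝ) : lam1 M = sSup (spectrum ℝ M) := by
  rw [lam1, ← spectrum_toLin']
  congr 1
  ext r
  rw [← Module.End.hasEigenvalue_iff_mem_spectrum, Module.End.hasEigenvalue_iff,
    Submodule.ne_bot_iff]
  simp only [Module.End.mem_eigenspace_iff, toLin'_apply]
  exact ⟨fun ⟨v, hv0, hv⟩ ↦ ⟨v, hv, hv0⟩, fun ⟨v, hv, hv0⟩ ↦ ⟨v, hv0, hv⟩⟩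

lemma le_lam1_of_mem_spectrum {M : Matrix (Fin n) (Fin n) ℝ} {r : ℝ} (hr : r ∈ spectrum ℝ M) :
    r ≤ lam1 M :=
  lam1_eq_sSup_spectrum M ▸ le_csSup M.finite_real_spectrum.bddAbove hr

lemma rayleighQuotient_le_lam1 {X : Matrix (Fin n) (Fin n) ℝ} (hX : X.IsSymm)
    {v : EuclideanSpace ℝ (Fin n)} (hv : v ≠ 0) :
    (toEuclideanCLM (𝕜 := ℝ) X).rayleighQuotient v ≤ lam1 X := by
  have : Nontrivial (EuclideanSpace ℝ (Fin n)) := nontrivial_of_ne v 0 hv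
  have hT : (toEuclideanLin X).IsSymmetric :=
    isSymmetric_toEuclideanLin_iff.2 (isHermitian_iff_isSymm.2 hX)
  have hbdd : BddAbove (Set.range fun x : {x : EuclideanSpace ℝ (Fin n) // x ≠ 0} ↦
      (toEuclideanCLM (𝕜 := ℝ) X).rayleighQuotient x) :=
    ⟨_, Set.forall_mem_range.2 fun x ↦
      (le_abs_self _).trans (ContinuousLinearMap.rayleighQuotient_le_norm _ _)⟩
  refine (le_ciSup hbdd ⟨v, hv⟩).trans (le_lam1_of_mem_spectrum ?_)
  rw [← spectrum_toLpLin 2, ← Module.End.hasEigenvalue_iff_mem_spectrum]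
  exact hT.hasEigenvalue_iSup_of_finiteDimensional

lemma entry_le_lam1 {X : Matrix (Fin n) (Fin n) ℝ} (hX : X.IsSymm) {i j : Fin n} (hij : i ≠ j)
    (hi : X i i = 0) (hj : X j j = 0) : X i j ≤ lam1 X := by
  set v := EuclideanSpace.single i (1 : ℝ) + EuclideanSpace.single j 1
  have hv : v ≠ 0 := fun h ↦ by simpa [v, hij] using congrArg (· i) h
  have hnorm : ‖v‖ ^ 2 = 2 := by
    rw [← real_inner_self_eq_norm_sq]
    simp only [v, inner_add_left, inner_add_right, EuclideanSpace.inner_single_right]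
    simp [hij, hij.symm]
    norm_num
  refine le_of_eq_of_le ?_ (rayleighQuotient_le_lam1 hX hv)
  rw [ContinuousLinearMap.rayleighQuotient, ContinuousLinearMap.reApplyInnerSelf_apply, hnorm]
  simp [v, inner_add_left, inner_add_right, EuclideanSpace.inner_single_right, hi, hj,
    hX.apply i j]

end Matrix

lemma card_le_two_mul_card_filter_lt {V : Type*} [Fintype V] [LinearOrder V]
    {r : V → V → Prop} [DecidableRel r] (hr : ∀ i j, r i j → r j i) (h : ∀ i, ∃ j ≠ i, r i j) :
    Fintype.card V ≤ 2 * #{p : {p : V × V // p.1 < p.2} | r p.1.1 p.1.2} := by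
  choose nb hnb_ne hnb using h
  let f (i : V) : {p : V × V // p.1 < p.2} :=
    ⟨(min i (nb i), max i (nb i)), min_lt_max.2 (hnb_ne i).symm⟩
  have hf : ∀ i, i = (f i).1.1 ∨ i = (f i).1.2 := fun i ↦ by
    rcases le_total i (nb i) with hi | hi <;> simp [f, hi]
  refine card_le_mul_card_image_of_maps_to (f := f) (fun i _ ↦ ?_) 2 fun e _ ↦ ?_
  · rcases le_total i (nb i) with hi | hi
    · simpa [f, hi] using hnb i
    · simpa [f, hi] using hr _ _ (hnb i)
  · calc #{i | f i = e} ≤ #{e.1.1, e.1.2} :=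
          card_le_card fun i hi ↦ by
            rw [mem_filter] at hi
            rcases hf i with h | h <;> rw [hi.2] at h <;> simp [h]
      _ ≤ 2 := card_le_two

def upperEdges {n : ℕ} (M : Matrix (Fin n) (Fin n) ℝ) :
    Finset {p : Fin n × Fin n // p.1 < p.2} :=
  {p | M p.1.1 p.1.2 = 1}

@[simp]
lemma mem_upperEdges {n : ℕ} {M : Matrix (Fin n) (Fin n) ℝ}
    {p : {p : Fin n × Fin n // p.1 < p.2}} :
    p ∈ upperEdges M ↔ M p.1.1 p.1.2 = 1 := by
  simp [upperEdges]

lemma card_le_two_mul_card_upperEdges {n d : ℕ} {M : Matrix (Fin n) (Fin n) ℝ}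
    (hM : M ∈ RegAdj n d) (hd : d ≠ 0) :
    n ≤ 2 * #(upperEdges M) := by
  obtain ⟨hsymm, hdiag, h01, hrow⟩ := hM
  have hnb (i : Fin n) : ∃ j ≠ i, M i j = 1 := by
    obtain ⟨j, -, hj⟩ := exists_ne_zero_of_sum_ne_zero (s := univ) (f := M i)
      (by rw [hrow i]; exact_mod_cast hd)
    exact ⟨j, fun hji ↦ hj (hji ▸ hdiag i), (h01 i j).resolve_left hj⟩
  have : DecidableRel fun i j ↦ M i j = 1 := fun _ _ ↦ inferInstance
  convert card_le_two_mul_card_filter_lt (r := fun i j ↦ M i j = 1)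
    (fun i j h ↦ (hsymm.apply i j).trans h) hnb
  · exact (Fintype.card_fin n).symm
  · ext; simp

section Probability

variable {Ω : Type*} [MeasurableSpace Ω] {P : Measure Ω}

lemma ProbabilityTheory.IndepFun.measure_setOf_prodMk_mem_le {α β : Type*}
    [MeasurableSpace α] [MeasurableSpace β] [IsProbabilityMeasure P] {X : Ω → α} {Y : Ω → β}
    (hX : Measurable X) (hY : Measurable Y) (hXY : IndepFun X Y P) {S : Set (α × β)}
    (hS : MeasurableSet S) {c : ℝ≥0∞} (hc : ∀ ω, P {ω' | (X ω, Y ω') ∈ S} ≤ c) :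
    P {ω | (X ω, Y ω) ∈ S} ≤ c :=
  calc P {ω | (X ω, Y ω) ∈ S} = ((P.map X).prod (P.map Y)) S := by
        rw [← (indepFun_iff_map_prod_eq_prod_map_map hX.aemeasurable hY.aemeasurable).1 hXY,
          Measure.map_apply (hX.prodMk hY) hS]
        rfl
    _ = ∫⁻ x, P.map Y (Prod.mk x ⁻¹' S) ∂(P.map X) := Measure.prod_apply hS
    _ ≤ ∫⁻ ω, P.map Y (Prod.mk (X ω) ⁻¹' S) ∂P := lintegral_map_le _ _
    _ ≤ ∫⁻ _, c ∂P := lintegral_mono fun ω ↦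
        (Measure.map_apply hY (measurable_prodMk_left hS)).trans_le (hc ω)
    _ = c := by simp

lemma ProbabilityTheory.iIndepFun.measure_biInter_preimage_eq_pow {ι β : Type*}
    [MeasurableSpace β] {X : ι → Ω → β} {μ : Measure β} (h : iIndepFun X P)
    (hX : ∀ i, Measurable (X i)) (hμ : ∀ i, P.map (X i) = μ) (s : Finset ι) {B : Set β}
    (hB : MeasurableSet B) : P (⋂ i ∈ s, X i ⁻¹' B) = μ B ^ s.card := by
  rw [h.measure_inter_preimage_eq_mul s fun _ _ ↦ hB, ← Finset.prod_const]
  exact Finset.prod_congr rfl fun i _ ↦ by rw [← hμ i, Measure.map_apply (hX i) hB]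

end Probability

lemma le_lam1_hadamard {n d : ℕ} {M N : Matrix (Fin n) (Fin n) ℝ} (hM : M ∈ RegAdj n d)
    (hN : N.IsSymm) {i j : Fin n} (hij : i ≠ j) (hMij : M i j = 1) :
    N i j ≤ lam1 (M.hadamard N) := by
  obtain ⟨hMsymm, hMdiag, -, -⟩ := hM
  have hsymm : (M.hadamard N).IsSymm :=
    IsSymm.ext fun i j ↦ by simp [hMsymm.apply i j, hN.apply i j]
  simpa [hMij] using entry_le_lam1 hsymm hij (by simp [hMdiag]) (by simp [hMdiag])

lemma Real.one_sub_rpow_le_inv_one_add_mul {x α : ℝ} (hx₀ : 0 ≤ x) (hx₁ : x ≤ 1)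
    (hα : 0 ≤ α) : (1 - x) ^ α ≤ (1 + α * x)⁻¹ :=
  calc (1 - x) ^ α ≤ exp (-x) ^ α := rpow_le_rpow (by linarith) (one_sub_le_exp_neg x) hα
    _ = (exp (α * x))⁻¹ := by rw [← exp_mul, ← exp_neg]; ring_nf
    _ ≤ (1 + α * x)⁻¹ := inv_anti₀ (by positivity) (by linarith [add_one_le_exp (α * x)])

lemma Real.rpow_sub_half_rpow_le {L α τ : ℝ} (hL : 1 ≤ L) (hα : 0 < α) (hτ : τ ≤ 1) :
    (L ^ (1 / α) - L ^ (τ / α) / 2) ^ α ≤ L - α / (α + 2) * L ^ ((α + τ - 1) / α) := by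
  have hL₀ : 0 < L := by linarith
  set δ := L ^ ((τ - 1) / α)
  have hδ₀ : 0 < δ := rpow_pos_of_pos hL₀ _
  have hδ₁ : δ ≤ 1 :=
    rpow_le_one_of_one_le_of_nonpos hL (div_nonpos_of_nonpos_of_nonneg (by linarith) hα.le)
  have hτδ : L ^ (τ / α) = L ^ (1 / α) * δ := by
    rw [← rpow_add hL₀]; congr 1; ring
  have hLδ : L * δ = L ^ ((α + τ - 1) / α) := by
    rw [show (α + τ - 1) / α = 1 + (τ - 1) / α by field_simp; ring, rpow_add hL₀, rpow_one]
  have hinv : (1 + α * (δ / 2))⁻¹ ≤ 1 - α / (α + 2) * δ := by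
    rw [inv_le_iff_one_le_mul₀ (by positivity)]
    field_simp
    nlinarith [mul_nonneg (mul_nonneg (sq_nonneg α) hδ₀.le) (sub_nonneg.2 hδ₁)]
  calc (L ^ (1 / α) - L ^ (τ / α) / 2) ^ α = L * (1 - δ / 2) ^ α := by
        rw [hτδ, show L ^ (1 / α) - L ^ (1 / α) * δ / 2 = L ^ (1 / α) * (1 - δ / 2) by ring,
          mul_rpow (by positivity) (by linarith), one_div, rpow_inv_rpow hL₀.le hα.ne']
    _ ≤ L * (1 + α * (δ / 2))⁻¹ := mul_le_mul_of_nonneg_left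
        (one_sub_rpow_le_inv_one_add_mul (by positivity) (by linarith) hα.le) hL₀.le
    _ ≤ L * (1 - α / (α + 2) * δ) := mul_le_mul_of_nonneg_left hinv hL₀.le
    _ = L - α / (α + 2) * L ^ ((α + τ - 1) / α) := by rw [← hLδ]; ring

lemma IsWeibull.measure_Iic_le {α C₁ C₂ : ℝ} {μ : Measure ℝ} (h : IsWeibull α C₁ C₂ μ)
    {t u : ℝ} (htu : t < u) (hu : 1 ≤ u) :
    μ (Set.Iic t) ≤ 1 - ENNReal.ofReal (C₁ * exp (-u ^ α) / 2) := by
  have := h.1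
  have hdisj : Disjoint (Set.Iic t) {x | u ≤ x} :=
    Set.disjoint_left.2 fun x (hxt : x ≤ t) (hxu : u ≤ x) ↦ by linarith
  have hsum : μ (Set.Iic t) + μ {x | u ≤ x} ≤ 1 :=
    (measure_union hdisj measurableSet_Ici).symm.trans_le prob_le_one
  exact (ENNReal.le_sub_of_add_le_right (measure_ne_top _ _) hsum).trans
    (tsub_le_tsub_left (h.2 u hu).1 1)

lemma ENNReal.one_sub_ofReal_pow_le {c : ℝ} (hc : 0 ≤ c) (k : ℕ) :
    (1 - ENNReal.ofReal c) ^ k ≤ ENNReal.ofReal (exp (-(k * c))) := by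
  calc (1 - ENNReal.ofReal c) ^ k = ENNReal.ofReal (1 - c) ^ k := by
        rw [ENNReal.ofReal_sub _ hc, ENNReal.ofReal_one]
    _ ≤ ENNReal.ofReal (exp (-c)) ^ k := by gcongr; exact one_sub_le_exp_neg c
    _ = ENNReal.ofReal (exp (-(k * c))) := by
        rw [← ENNReal.ofReal_pow (exp_pos _).le, ← exp_nat_mul]; ring_nf

lemma tendsto_ofReal_exp_neg_mul_exp_mul_log_rpow {a b β : ℝ} (ha : 0 < a) (hb : 0 < b)
    (hβ : 0 < β) :
    Tendsto (fun n : ℕ ↦ ENNReal.ofReal (exp (-(a * exp (b * log n ^ β))))) atTop (𝓝 0) := by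
  have hlog : Tendsto (fun n : ℕ ↦ log n) atTop atTop :=
    tendsto_log_atTop.comp tendsto_natCast_atTop_atTop
  have := ((tendsto_exp_atTop.comp
    (((tendsto_rpow_atTop hβ).comp hlog).const_mul_atTop hb)).const_mul_atTop ha)
  simpa using
    ENNReal.tendsto_ofReal (tendsto_exp_atBot.comp (tendsto_neg_atTop_atBot.comp this))

section WRRGModel

variable {n d : ℕ} {α C₁ C₂ : ℝ} {Ω : Type*} [MeasurableSpace Ω] {P : Measure Ω}
  {A W : Ω → Matrix (Fin n) (Fin n) ℝ} {μ : Measure ℝ}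

lemma WRRGModel.isWeibull (hmod : WRRGModel d α C₁ C₂ P A W μ) : IsWeibull α C₁ C₂ μ :=
  hmod.2.2.2.2.2.2.2.1

lemma WRRGModel.measure_lam1_le_le_pow (hmod : WRRGModel d α C₁ C₂ P A W μ) (hd : d ≠ 0)
    (t : ℝ) : P {ω | lam1 ((A ω).hadamard (W ω)) ≤ t} ≤ μ (Set.Iic t) ^ (n / 2) := by
  have := hmod.isWeibull.1
  obtain ⟨hP, hA, hW, hAreg, -, hWsymm, -, -, hmarg, hiind, hindep⟩ := hmod
  let S : Set (Matrix (Fin n) (Fin n) ℝ × Matrix (Fin n) (Fin n) ℝ) :=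
    {q | ∀ p : {p : Fin n × Fin n // p.1 < p.2}, q.1 p.1.1 p.1.2 = 1 → q.2 p.1.1 p.1.2 ≤ t}
  have hS : MeasurableSet S := by measurability
  have hsub : {ω | lam1 ((A ω).hadamard (W ω)) ≤ t} ⊆ {ω | (A ω, W ω) ∈ S} :=
    fun ω hω p hp ↦ (le_lam1_hadamard (hAreg ω) (hWsymm ω) p.2.ne hp).trans hω
  refine (measure_mono hsub).trans (hindep.measure_setOf_prodMk_mem_le hA hW hS fun ω ↦ ?_)
  calc P {ω' | (A ω, W ω') ∈ S}
      = P (⋂ p ∈ upperEdges (A ω), (fun ω' ↦ W ω' p.1.1 p.1.2) ⁻¹' Set.Iic t) := by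
        congr 1; ext; simp [S]
    _ = μ (Set.Iic t) ^ #(upperEdges (A ω)) :=
        hiind.measure_biInter_preimage_eq_pow (fun _ ↦ by fun_prop) (fun p ↦ hmarg _ _ p.2) _
          measurableSet_Iic
    _ ≤ μ (Set.Iic t) ^ (n / 2) := by
        refine pow_le_pow_right_of_le_one' prob_le_one ?_
        have := card_le_two_mul_card_upperEdges (hAreg ω) hd
        omega

lemma WRRGModel.measure_lam1_le_log_rpow_le {τ : ℝ} (hmod : WRRGModel d α C₁ C₂ P A W μ)
    (hd : d ≠ 0) (hC₁ : 0 ≤ C₁) (hα : 0 < α) (hτ : τ ≤ 1) (hn : 2 ≤ n) (hL₁ : 1 ≤ log n)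
    (hL₂ : 2 ≤ log n ^ (1 / α)) :
    P {ω | lam1 ((A ω).hadamard (W ω)) ≤ log n ^ (1 / α) - log n ^ (τ / α)} ≤
      ENNReal.ofReal (exp (-(C₁ / 6 * exp (α / (α + 2) * log n ^ ((α + τ - 1) / α))))) := by
  set L := log n
  set E := exp (α / (α + 2) * L ^ ((α + τ - 1) / α))
  set u := L ^ (1 / α) - L ^ (τ / α) / 2 with hu
  have hτL : L ^ (τ / α) ≤ L ^ (1 / α) :=
    rpow_le_rpow_of_exponent_le hL₁ (div_le_div_of_nonneg_right hτ hα.le)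
  have hτL₀ : 0 < L ^ (τ / α) := rpow_pos_of_pos (by linarith) _
  have hn₀ : (0 : ℝ) < n := by positivity
  have htail : E / n ≤ exp (-u ^ α) := by
    rw [← exp_log hn₀, ← exp_sub]
    exact exp_le_exp.2 (by linarith [rpow_sub_half_rpow_le hL₁ hα hτ])
  have hhalf : (n : ℝ) / 3 ≤ (n / 2 : ℕ) := by
    rw [div_le_iff₀ (by norm_num)]
    exact_mod_cast (by omega : n ≤ n / 2 * 3)
  calc P {ω | lam1 ((A ω).hadamard (W ω)) ≤ L ^ (1 / α) - L ^ (τ / α)}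
      ≤ μ (Set.Iic (L ^ (1 / α) - L ^ (τ / α))) ^ (n / 2) := hmod.measure_lam1_le_le_pow hd _
    _ ≤ (1 - ENNReal.ofReal (C₁ * exp (-u ^ α) / 2)) ^ (n / 2) := by
        gcongr
        exact hmod.isWeibull.measure_Iic_le (by linarith) (by linarith)
    _ ≤ ENNReal.ofReal (exp (-((n / 2 : ℕ) * (C₁ * exp (-u ^ α) / 2)))) :=
        ENNReal.one_sub_ofReal_pow_le (by positivity) _
    _ ≤ ENNReal.ofReal (exp (-(C₁ / 6 * E))) := by
        refine ENNReal.ofReal_le_ofReal (exp_le_exp.2 (neg_le_neg ?_))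
        calc C₁ / 6 * E = n / 3 * (C₁ * (E / n) / 2) := by field_simp; ring
          _ ≤ (n / 2 : ℕ) * (C₁ * exp (-u ^ α) / 2) := by gcongr

end WRRGModel

theorem largest_eigenvalue_refined_lower_tail_general
    (d : ℕ) (hd : 3 ≤ d) (α : ℝ) (hα : 0 < α)
    (C₁ C₂ : ℝ) (hC₁ : 0 < C₁)
    (Ω : ℕ → Type*) [∀ n, MeasurableSpace (Ω n)]
    (P : ∀ n, Measure (Ω n))
    (A W : ∀ n, Ω n → Matrix (Fin n) (Fin n) ℝ)
    (μ : ℕ → Measure ℝ)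
    (hmodel : ∀ n, d < n → Even (n * d) →
      WRRGModel d α C₁ C₂ (P n) (A n) (W n) (μ n)) :
    ∀ τ : ℝ, max 0 (1 - α) < τ → τ < 1 →
      Tendsto
        (fun n => P n {ω | lam1 (Matrix.hadamard (A n ω) (W n ω)) ≤
          Real.log n ^ (1 / α) - Real.log n ^ (τ / α)})
        (atTop ⊓ 𝓟 {n : ℕ | d < n ∧ Even (n * d)}) (nhds 0) := by
  intro τ hτ hτ₁
  have hβ : 0 < (α + τ - 1) / α := div_pos (by linarith [(max_lt_iff.1 hτ).2]) hα
  have hlog : Tendsto (fun n : ℕ ↦ log n) atTop atTop :=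
    tendsto_log_atTop.comp tendsto_natCast_atTop_atTop
  have hbound := tendsto_ofReal_exp_neg_mul_exp_mul_log_rpow (by positivity : 0 < C₁ / 6)
    (by positivity : 0 < α / (α + 2)) hβ
  refine tendsto_of_tendsto_of_tendsto_of_le_of_le' tendsto_const_nhds
    (hbound.mono_left inf_le_left) (Eventually.of_forall fun _ ↦ zero_le) ?_
  rw [eventually_inf_principal]
  filter_upwards [eventually_ge_atTop 2, hlog.eventually_ge_atTop 1,
    ((tendsto_rpow_atTop (one_div_pos.2 hα)).comp hlog).eventually_ge_atTop 2]
    with n hn hL₁ hL₂ ⟨hdn, heven⟩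
  exact (hmodel n hdn heven).measure_lam1_le_log_rpow_le (by omega) hC₁.le hα hτ₁.le hn hL₁
    hL₂

/-- **Refined lower tail fluctuation bound for heavy tails `0 < α ≤ 2`.** -/
theorem largest_eigenvalue_refined_lower_tail
    (d : ℕ) (hd : 3 ≤ d) (α : ℝ) (hα : 0 < α) (hα2 : α ≤ 2)
    (C₁ C₂ : ℝ) (hC₁ : 0 < C₁) (hC₂ : 0 < C₂)
    (Ω : ℕ → Type*) [∀ n, MeasurableSpace (Ω n)]
    (P : ∀ n, Measure (Ω n))
    (A W : ∀ n, Ω n → Matrix (Fin n) (Fin n) ℝ)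
    (μ : ℕ → Measure ℝ)
    (hmodel : ∀ n, d < n → Even (n * d) →
      WRRGModel d α C₁ C₂ (P n) (A n) (W n) (μ n)) :
    ∀ τ : ℝ, max 0 (1 - α) < τ → τ < 1 →
      Tendsto
        (fun n => P n {ω | lam1 (Matrix.hadamard (A n ω) (W n ω)) ≤
          Real.log n ^ (1 / α) - Real.log n ^ (τ / α)})
        (atTop ⊓ 𝓟 {n : ℕ | d < n ∧ Even (n * d)}) (nhds 0) :=
  largest_eigenvalue_refined_lower_tail_general d hd α hα C₁ C₂ hC₁ Ω P A W μ hmodel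
end
end

section
/- Largest eigenvalue of random tree-networks with bounded degree, case 0 < α ≤ 1: fix constants c > 0, an integer d ≥ 3, and α ∈ (0,1]. Let (b_n) satisfy b_n / log log n → ∞ and b_n = O(log n), and let (a_n) satisfy a_n / (b_n^{α/2}·(log n)^{1−α/2}) → ∞. For each n, let T_n be a finite tree with maximum degree at most d and |V(T_n)| ≤ c·log n / b_n, equipped with edge-weights (Y_{ij})_{{i,j}∈E(T_n)} that are i.i.d. copies of a Weibull random variable with shape parameter α conditioned on being greater than b_n^{1/α} in absolute value, and let λ₁(n) denote the largest eigenvalue of the corresponding symmetric weighted adjacency matrix. Then n · P( λ₁(n) ≥ (log n)^{1/α} + a_n^{1/α} ) → 0 as n → ∞. -/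
/-!
If `λ₁ ≥ t > 0`, some row of the weighted adjacency matrix has absolute sum at least `t`, so by
subadditivity of `x ↦ x ^ α` some vertex `i` has `∑_{j ∼ i} (|Y i j| ^ α - b)₊ ≥ t ^ α - d b`.
Conditioned on `|Y| > b ^ (1 / α)`, the excess `(|Y| ^ α - b)₊` has an exponential tail whose
constant does not depend on `b`, so its exponential moment at `θ = 1 - 1 / log n` is `O(log n)`.
A Chernoff bound over the at most `d` independent edges at `i` and a union bound over the at most
`c log n` vertices give `n P(λ₁ ≥ t) ≤ exp (log n + O(log log n) - θ (t ^ α - d b))`.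
For `t = (log n) ^ (1 / α) + a ^ (1 / α)`, concavity of `x ↦ x ^ α` and the growth conditions on
`a` and `b` give `θ (t ^ α - d b) ≥ log n + √(log n) / 4 - 1` eventually.
-/

open MeasureTheory ProbabilityTheory Filter Real
open scoped ENNReal NNReal

noncomputable section

open Classical in
/-- The sum of `f i j` over the undirected edges `{i, j}` of `G`
(assuming `f` is symmetric, each undirected edge is counted once). -/
def edgeSum {m : ℕ} (G : SimpleGraph (Fin m)) (f : Fin m → Fin m → ℝ) : ℝ :=
  (∑ i, ∑ j, if G.Adj i j then f i j else 0) / 2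

/-- The maximum degree of `G` is at most `d`. -/
def MaxDegLE {m : ℕ} (G : SimpleGraph (Fin m)) (d : ℕ) : Prop :=
  ∀ v, {w | G.Adj v w}.ncard ≤ d

open Classical in
/-- The weighted adjacency matrix of the network `(G, Y)`: entry `Y i j` if `{i,j}` is an
edge of `G`, and `0` otherwise. -/
def weightedAdj {m : ℕ} (G : SimpleGraph (Fin m)) (Y : Fin m → Fin m → ℝ) :
    Matrix (Fin m) (Fin m) ℝ :=
  Matrix.of fun i j => if G.Adj i j then Y i j else 0

open Set

namespace Real

lemma rpow_sum_le_sum_rpow {ι : Type*} (s : Finset ι) {f : ι → ℝ} (hf : ∀ i ∈ s, 0 ≤ f i)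
    {p : ℝ} (hp : 0 < p) (hp1 : p ≤ 1) : (∑ i ∈ s, f i) ^ p ≤ ∑ i ∈ s, f i ^ p :=
  Finset.le_sum_of_subadditive_on_pred (· ^ p) (0 ≤ ·) (zero_rpow hp.ne').le
    (fun _ _ hx hy => rpow_add_le_add_rpow hx hy hp.le hp1) (fun _ _ => add_nonneg) f hf

lemma div_one_add_mul_le_one_add_rpow_sub_one {α y k : ℝ} (hα : 0 ≤ α) (hα1 : α ≤ 1)
    (hy : 0 ≤ y) (hyk : y ≤ k) : α / (1 + k) * y ≤ (1 + y) ^ α - 1 := by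
  have hy1 : 0 < 1 + y := by linarith
  have hu : y / (1 + y) ≤ 1 := (div_le_one hy1).2 (by linarith)
  -- Bernoulli's inequality at `1 - y / (1 + y) = (1 + y)⁻¹`
  have hbern : ((1 + y) ^ α)⁻¹ ≤ 1 - α * (y / (1 + y)) := by
    have h := rpow_one_add_le_one_add_mul_self (s := -(y / (1 + y))) (by linarith) hα hα1
    rwa [show 1 + -(y / (1 + y)) = (1 + y)⁻¹ by field_simp; ring, inv_rpow hy1.le,
      mul_neg, ← sub_eq_add_neg] at h
  have hpow : 1 ≤ (1 + y) ^ α := one_le_rpow (by linarith) hα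
  have hmain : α * (y / (1 + y)) ≤ (1 + y) ^ α - 1 := by
    have := mul_le_mul_of_nonneg_left hbern (by positivity : 0 ≤ (1 + y) ^ α)
    rw [mul_inv_cancel₀ (by positivity)] at this
    nlinarith [mul_nonneg hα (div_nonneg hy hy1.le)]
  calc α / (1 + k) * y = α * (y / (1 + k)) := by ring
    _ ≤ α * (y / (1 + y)) := by gcongr
    _ ≤ _ := hmain

lemma tendsto_mul_one_add_mul_pow_mul_exp_neg_sqrt {K : ℝ} (hK : 0 ≤ K) (d : ℕ) :
    Tendsto (fun x => x * (1 + K * x) ^ d * exp (-(√x / 4))) atTop (nhds 0) := by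
  have hlim : Tendsto (fun x => (1 + K) ^ d * 16 ^ (d + 1) *
      ((√x / 4) ^ (2 * (d + 1)) * exp (-(√x / 4)))) atTop (nhds 0) := by
    simpa using ((tendsto_pow_mul_exp_neg_atTop_nhds_zero _).comp
      (tendsto_sqrt_atTop.atTop_div_const (by norm_num : (0:ℝ) < 4))).const_mul _
  refine squeeze_zero' ((eventually_ge_atTop 0).mono fun x hx => by positivity) ?_ hlim
  filter_upwards [eventually_ge_atTop 1] with x hx
  have hsq : (√x / 4) ^ (2 * (d + 1)) * 16 ^ (d + 1) = x ^ (d + 1) := by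
    rw [pow_mul, ← mul_pow, div_pow, sq_sqrt (by linarith)]; ring_nf
  calc x * (1 + K * x) ^ d * exp (-(√x / 4))
      ≤ x * ((1 + K) * x) ^ d * exp (-(√x / 4)) := by gcongr; nlinarith
    _ = (1 + K) ^ d * ((√x / 4) ^ (2 * (d + 1)) * 16 ^ (d + 1)) * exp (-(√x / 4)) := by
      rw [hsq, mul_pow, pow_succ]; ring
    _ = _ := by ring

end Real

section Matrix

attribute [local instance] Matrix.linftyOpNormedAddCommGroup

lemma lam1_le_linfty_opNorm {n : ℕ} (M : Matrix (Fin n) (Fin n) ℝ) : lam1 M ≤ ‖M‖ := by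
  refine Real.sSup_le (fun r ⟨v, hv, hMv⟩ => ?_) (norm_nonneg M)
  have h := Matrix.linfty_opNorm_mulVec M v
  rw [hMv, norm_smul, Real.norm_eq_abs] at h
  exact (le_abs_self r).trans (le_of_mul_le_mul_right h (norm_pos_iff.2 hv))

lemma exists_le_sum_abs_of_le_lam1 {n : ℕ} (M : Matrix (Fin n) (Fin n) ℝ) {t : ℝ} (ht : 0 < t)
    (h : t ≤ lam1 M) : ∃ i, t ≤ ∑ j, |M i j| := by
  by_contra! hlt
  have hsup : (Finset.univ.sup fun i => ∑ j, ‖M i j‖₊) < t.toNNReal :=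
    (Finset.sup_lt_iff (by simpa using ht)).2 fun i _ => by
      rw [← NNReal.coe_lt_coe, NNReal.coe_sum, Real.coe_toNNReal _ ht.le]
      simpa using hlt i
  have h' := (h.trans (lam1_le_linfty_opNorm M)).trans_eq (Matrix.linfty_opNorm_def M)
  have := NNReal.coe_lt_coe.2 hsup
  rw [Real.coe_toNNReal _ ht.le] at this
  linarith

end Matrix

def weibullExcess (α B x : ℝ) : ℝ := max (|x| ^ α - B) 0

@[fun_prop]
lemma measurable_weibullExcess (α B : ℝ) : Measurable (weibullExcess α B) := by
  unfold weibullExcess; fun_prop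

section Network

variable {m : ℕ} (G : SimpleGraph (Fin m))

lemma MaxDegLE.card_neighborSet_le [DecidableRel G.Adj] {d : ℕ} (h : MaxDegLE G d) (i : Fin m) :
    Fintype.card (G.neighborSet i) ≤ d := by
  rw [← Nat.card_eq_fintype_card, Nat.card_coe_set_eq]; exact h i

lemma sum_abs_weightedAdj [DecidableRel G.Adj] (W : Fin m → Fin m → ℝ) (i : Fin m) :
    ∑ j, |weightedAdj G W i j| = ∑ j : G.neighborSet i, |W i j| := by
  simp only [weightedAdj, Matrix.of_apply, apply_ite abs, abs_zero]
  rw [← Finset.sum_filter]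
  exact Finset.sum_subtype _ (by simp) _

lemma exists_le_sum_weibullExcess [DecidableRel G.Adj] {d : ℕ} (hdeg : MaxDegLE G d)
    (W : Fin m → Fin m → ℝ) {α B t : ℝ} (hα : 0 < α) (hα1 : α ≤ 1) (hB : 0 ≤ B) (ht : 0 < t)
    (h : t ≤ lam1 (weightedAdj G W)) :
    ∃ i, t ^ α - d * B ≤ ∑ j : G.neighborSet i, weibullExcess α B (W i j) := by
  obtain ⟨i, hi⟩ := exists_le_sum_abs_of_le_lam1 _ ht h
  rw [sum_abs_weightedAdj] at hi
  refine ⟨i, ?_⟩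
  have hcard : (Fintype.card (G.neighborSet i) : ℝ) ≤ d := by
    exact_mod_cast hdeg.card_neighborSet_le G i
  calc t ^ α - d * B
      ≤ (∑ j : G.neighborSet i, |W i j|) ^ α - Fintype.card (G.neighborSet i) * B := by
        gcongr
    _ ≤ ∑ j : G.neighborSet i, (|W i j| ^ α - B) := by
        rw [Finset.sum_sub_distrib, Finset.sum_const, Finset.card_univ, nsmul_eq_mul]
        gcongr
        exact Real.rpow_sum_le_sum_rpow _ (fun j _ => abs_nonneg _) hα hα1
    _ ≤ _ := Finset.sum_le_sum fun j _ => le_max_left _ _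

def neighborEdge (i : Fin m) (j : G.neighborSet i) :
    {p : Fin m × Fin m // p.1 < p.2 ∧ G.Adj p.1 p.2} :=
  have hj : G.Adj i j := j.2
  ⟨(min i j, max i j), min_lt_max.2 (G.ne_of_adj hj), by
    rcases le_total i j with h | h
    · simpa [h] using hj
    · simpa [h] using hj.symm⟩

lemma neighborEdge_injective (i : Fin m) : Function.Injective (neighborEdge G i) := by
  rintro ⟨j, hj⟩ ⟨j', hj'⟩ h
  have hne := G.ne_of_adj hj
  have hne' := G.ne_of_adj hj'
  simp only [neighborEdge, Subtype.mk.injEq, Prod.mk.injEq] at h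
  obtain ⟨h₁, h₂⟩ := h
  rw [Fin.ext_iff, Fin.coe_min, Fin.coe_min] at h₁
  rw [Fin.ext_iff, Fin.coe_max, Fin.coe_max] at h₂
  rw [Ne, Fin.ext_iff] at hne hne'
  exact Subtype.ext (Fin.ext (show (j : ℕ) = j' by omega))

lemma apply_neighborEdge {Y : Fin m → Fin m → ℝ} (hY : ∀ i j, Y i j = Y j i) (i : Fin m)
    (j : G.neighborSet i) : Y (neighborEdge G i j).1.1 (neighborEdge G i j).1.2 = Y i j := by
  rcases le_total i j with h | h
  · simp [neighborEdge, h]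
  · simp [neighborEdge, h, hY j]

end Network

section MGF

variable {Ω : Type*} [MeasurableSpace Ω] {μ : Measure Ω} {Z : Ω → ℝ} {K θ : ℝ}

lemma lintegral_exp_mul_sub_one_le (hZ : Measurable Z) (hZ0 : ∀ ω, 0 ≤ Z ω) (hK : 0 ≤ K)
    (htail : ∀ s, 0 < s → μ {ω | s ≤ Z ω} ≤ ENNReal.ofReal (K * exp (-s)))
    (hθ0 : 0 ≤ θ) (hθ1 : θ < 1) :
    ∫⁻ ω, ENNReal.ofReal (exp (θ * Z ω) - 1) ∂μ ≤ ENNReal.ofReal (K * θ / (1 - θ)) := by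
  have hderiv : ∀ t, HasDerivAt (fun t => exp (θ * t)) (θ * exp (θ * t)) t := fun t => by
    simpa [mul_comm] using ((hasDerivAt_id t).const_mul θ).exp
  have hcont : Continuous fun t => θ * exp (θ * t) := by fun_prop
  -- layer cake with `exp (θ z) - 1 = ∫ t in 0..z, θ * exp (θ * t)`
  have hlayer := lintegral_comp_eq_lintegral_meas_le_mul μ (ae_of_all _ hZ0) hZ.aemeasurable
    (fun t _ => hcont.intervalIntegrable 0 t)
    (ae_of_all _ fun t => by positivity : ∀ᵐ t ∂volume.restrict (Ioi 0), 0 ≤ θ * exp (θ * t))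
  simp only [intervalIntegral.integral_eq_sub_of_hasDerivAt (fun t _ => hderiv t)
    (hcont.intervalIntegrable _ _), mul_zero, exp_zero] at hlayer
  have hint : IntegrableOn (fun t => K * θ * exp ((θ - 1) * t)) (Ioi 0) :=
    (integrableOn_exp_mul_Ioi (by linarith) 0).const_mul _
  calc ∫⁻ ω, ENNReal.ofReal (exp (θ * Z ω) - 1) ∂μ
      = ∫⁻ t in Ioi 0, μ {ω | t ≤ Z ω} * ENNReal.ofReal (θ * exp (θ * t)) := hlayer
    _ ≤ ∫⁻ t in Ioi 0, ENNReal.ofReal (K * θ * exp ((θ - 1) * t)) := by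
        refine setLIntegral_mono' measurableSet_Ioi fun t ht => ?_
        rw [show K * θ * exp ((θ - 1) * t) = K * exp (-t) * (θ * exp (θ * t)) by
          rw [show (θ - 1) * t = -t + θ * t by ring, exp_add]; ring,
          ENNReal.ofReal_mul (by positivity : 0 ≤ K * exp (-t))]
        exact mul_le_mul_left (htail t ht) _
    _ = ENNReal.ofReal (K * θ / (1 - θ)) := by
        rw [← ofReal_integral_eq_lintegral_ofReal hint (ae_of_all _ fun t => by positivity),
          integral_const_mul, integral_exp_mul_Ioi (by linarith), mul_zero, exp_zero]
        have h1 : 1 - θ ≠ 0 := (by linarith : 0 < 1 - θ).ne'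
        have h2 : θ - 1 ≠ 0 := (by linarith : θ - 1 < 0).ne
        congr 1
        field_simp
        ring

lemma mgf_le_of_measure_ge_le_exp [IsProbabilityMeasure μ] (hZ : Measurable Z)
    (hZ0 : ∀ ω, 0 ≤ Z ω) (hK : 0 ≤ K)
    (htail : ∀ s, 0 < s → μ {ω | s ≤ Z ω} ≤ ENNReal.ofReal (K * exp (-s)))
    (hθ0 : 0 ≤ θ) (hθ1 : θ < 1) :
    Integrable (fun ω => exp (θ * Z ω)) μ ∧ mgf Z μ θ ≤ 1 + K * θ / (1 - θ) := by
  have hlint := lintegral_exp_mul_sub_one_le hZ hZ0 hK htail hθ0 hθ1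
  have hnonneg : ∀ ω, 0 ≤ exp (θ * Z ω) - 1 := fun ω =>
    sub_nonneg.2 (one_le_exp (mul_nonneg hθ0 (hZ0 ω)))
  have hmeas : Measurable fun ω => exp (θ * Z ω) - 1 := by fun_prop
  have hfint : Integrable (fun ω => exp (θ * Z ω) - 1) μ :=
    ⟨hmeas.aestronglyMeasurable, (hasFiniteIntegral_iff_ofReal (ae_of_all _ hnonneg)).2
      (hlint.trans_lt ENNReal.ofReal_lt_top)⟩
  have hexp : (fun ω => exp (θ * Z ω)) = fun ω => (exp (θ * Z ω) - 1) + 1 := by simp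
  refine ⟨hexp ▸ hfint.add (integrable_const 1), ?_⟩
  rw [mgf, hexp, integral_add hfint (integrable_const 1), integral_const, probReal_univ,
    one_smul, add_comm]
  gcongr
  rw [integral_eq_lintegral_of_nonneg_ae (ae_of_all _ hnonneg) hmeas.aestronglyMeasurable]
  exact ENNReal.toReal_le_of_le_ofReal (div_nonneg (mul_nonneg hK hθ0) (by linarith)) hlint

end MGF

section Weibull

variable {α C₁ C₂ B : ℝ} {μ : Measure ℝ}

lemma IsWeibull.ofReal_le_measure_lt_abs (hw : IsWeibull α C₁ C₂ μ) (hα : 0 < α) (hα1 : α ≤ 1)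
    (hC₁ : 0 ≤ C₁) (hB : 0 ≤ B) :
    ENNReal.ofReal (C₁ * exp (-(B + 1)) / 2) ≤ μ {x | B ^ (1 / α) < |x|} := by
  have ht : 1 ≤ B ^ (1 / α) + 1 := le_add_of_nonneg_left (by positivity)
  have hle : (B ^ (1 / α) + 1) ^ α ≤ B + 1 := by
    have h := rpow_add_le_add_rpow (rpow_nonneg hB (1 / α)) zero_le_one hα.le hα1
    rwa [← rpow_mul hB, one_div_mul_cancel hα.ne', rpow_one, one_rpow] at h
  calc ENNReal.ofReal (C₁ * exp (-(B + 1)) / 2)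
      ≤ ENNReal.ofReal (C₁ * exp (-(B ^ (1 / α) + 1) ^ α) / 2) := by gcongr
    _ ≤ μ {x | B ^ (1 / α) + 1 ≤ x} := (hw.2 _ ht).1
    _ ≤ μ {x | B ^ (1 / α) < |x|} := measure_mono fun x (hx : _ ≤ x) =>
        show _ < |x| by linarith [le_abs_self x]

lemma IsWeibull.measure_lt_abs_ne_zero (hw : IsWeibull α C₁ C₂ μ) (hα : 0 < α) (hα1 : α ≤ 1)
    (hC₁ : 0 < C₁) (hB : 0 ≤ B) : μ {x | B ^ (1 / α) < |x|} ≠ 0 :=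
  ((ENNReal.ofReal_pos.2 (by positivity)).trans_le
    (hw.ofReal_le_measure_lt_abs hα hα1 hC₁.le hB)).ne'

lemma IsWeibull.measure_weibullExcess_ge_le (hw : IsWeibull α C₁ C₂ μ) (hα : 0 < α)
    (hC₂ : 0 ≤ C₂) {s : ℝ} (hs : 0 < s) (hBs : 1 ≤ B + s) :
    μ {x | s ≤ weibullExcess α B x} ≤ ENNReal.ofReal (C₂ * exp (-(B + s))) := by
  set u := (B + s) ^ (1 / α)
  have hu : 1 ≤ u := one_le_rpow hBs (by positivity)
  have huα : u ^ α = B + s := by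
    rw [← rpow_mul (by linarith), one_div_mul_cancel hα.ne', rpow_one]
  have hsub : {x | s ≤ weibullExcess α B x} ⊆ {x | u ≤ x} ∪ {x | x ≤ -u} := by
    intro x (hx : s ≤ max _ _)
    have hxα : B + s ≤ |x| ^ α := by
      rcases le_total (|x| ^ α - B) 0 with h | h
      · rw [max_eq_right h] at hx; linarith
      · rw [max_eq_left h] at hx; linarith
    have hux : u ≤ |x| := by
      have h := rpow_le_rpow (by linarith) hxα (by positivity : 0 ≤ 1 / α)
      rwa [← rpow_mul (abs_nonneg x), mul_one_div_cancel hα.ne', rpow_one] at h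
    exact (le_abs'.1 hux).symm
  obtain ⟨-, h₁, -, h₂⟩ := hw.2 u hu
  rw [huα] at h₁ h₂
  calc μ {x | s ≤ weibullExcess α B x} ≤ μ {x | u ≤ x} + μ {x | x ≤ -u} :=
        (measure_mono hsub).trans (measure_union_le _ _)
    _ ≤ ENNReal.ofReal (C₂ * exp (-(B + s)) / 2) + ENNReal.ofReal (C₂ * exp (-(B + s)) / 2) :=
        add_le_add h₁ h₂
    _ = ENNReal.ofReal (C₂ * exp (-(B + s))) := by
        rw [← ENNReal.ofReal_add (by positivity) (by positivity), add_halves]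

lemma IsWeibull.cond_weibullExcess_ge_le (hw : IsWeibull α C₁ C₂ μ) (hα : 0 < α)
    (hα1 : α ≤ 1) (hC₁ : 0 < C₁) (hC₂ : 0 ≤ C₂) (hB : 1 ≤ B) {s : ℝ} (hs : 0 < s) :
    μ[|{x | B ^ (1 / α) < |x|}] {x | s ≤ weibullExcess α B x} ≤
      ENNReal.ofReal (2 * C₂ * exp 1 / C₁ * exp (-s)) := by
  have hD : 0 < C₁ * exp (-(B + 1)) / 2 := by positivity
  rw [cond_apply (measurableSet_lt measurable_const measurable_abs)]
  calc (μ {x | B ^ (1 / α) < |x|})⁻¹ * μ ({x | B ^ (1 / α) < |x|} ∩ {x | s ≤ weibullExcess α B x})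
      ≤ (ENNReal.ofReal (C₁ * exp (-(B + 1)) / 2))⁻¹ * ENNReal.ofReal (C₂ * exp (-(B + s))) :=
        mul_le_mul' (ENNReal.inv_le_inv.2 (hw.ofReal_le_measure_lt_abs hα hα1 hC₁.le (by linarith)))
          ((measure_mono inter_subset_right).trans
            (hw.measure_weibullExcess_ge_le hα hC₂ hs (by linarith)))
    _ = ENNReal.ofReal ((C₁ * exp (-(B + 1)) / 2)⁻¹ * (C₂ * exp (-(B + s)))) := by
        rw [← ENNReal.ofReal_inv_of_pos hD, ENNReal.ofReal_mul (inv_nonneg.2 hD.le)]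
    _ = ENNReal.ofReal (2 * C₂ * exp 1 / C₁ * exp (-s)) := by
        congr 1
        rw [show -(B + s) = -(B + 1) + (1 + -s) by ring, exp_add, exp_add]
        field_simp

end Weibull

lemma measureReal_sum_ge_le_exp_mul_pow {ι Ω : Type*} [Fintype ι] [MeasurableSpace Ω]
    {P : Measure Ω} [IsProbabilityMeasure P] {X : ι → Ω → ℝ} (hX : ∀ i, Measurable (X i))
    (hindep : iIndepFun X P) {θ M : ℝ} (hθ : 0 ≤ θ)
    (hint : ∀ i, Integrable (fun ω => exp (θ * X i ω)) P) (hmgf : ∀ i, mgf (X i) P θ ≤ M)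
    (s : ℝ) : P.real {ω | s ≤ ∑ i, X i ω} ≤ exp (-θ * s) * M ^ Fintype.card ι := by
  have hsum := hindep.integrable_exp_mul_sum hX (s := Finset.univ) fun i _ => hint i
  calc P.real {ω | s ≤ ∑ i, X i ω} = P.real {ω | s ≤ (∑ i, X i) ω} := by
        simp only [Finset.sum_apply]
    _ ≤ exp (-θ * s) * mgf (∑ i, X i) P θ := measure_ge_le_exp_mul_mgf s hθ hsum
    _ = exp (-θ * s) * ∏ i, mgf (X i) P θ := by rw [hindep.mgf_sum hX]
    _ ≤ exp (-θ * s) * ∏ _i : ι, M := by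
        gcongr with i
        · exact fun i _ => mgf_nonneg
        · exact hmgf i
    _ = exp (-θ * s) * M ^ Fintype.card ι := by rw [Finset.prod_const, Finset.card_univ]

section TreeNetwork

variable {m d : ℕ} (G : SimpleGraph (Fin m)) {Ω : Type*} [MeasurableSpace Ω] {P : Measure Ω}
  [IsProbabilityMeasure P] {Y : Ω → Fin m → Fin m → ℝ} {α B θ : ℝ}

lemma measure_sum_weibullExcess_ge_le [DecidableRel G.Adj] {ν : Measure ℝ} {M : ℝ}
    (hdeg : MaxDegLE G d)
    (hYmeas : Measurable Y) (hYsymm : ∀ ω i j, Y ω i j = Y ω j i)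
    (hlaw : ∀ i j, G.Adj i j → P.map (fun ω => Y ω i j) = ν)
    (hindep : iIndepFun (fun (e : {p : Fin m × Fin m // p.1 < p.2 ∧ G.Adj p.1 p.2}) ω =>
      Y ω e.1.1 e.1.2) P)
    (hθ : 0 ≤ θ) (hint : Integrable (fun x => exp (θ * weibullExcess α B x)) ν)
    (hmgf : mgf (weibullExcess α B) ν θ ≤ M) (hM : 1 ≤ M) (s : ℝ) (i : Fin m) :
    P {ω | s ≤ ∑ j : G.neighborSet i, weibullExcess α B (Y ω i j)} ≤
      ENNReal.ofReal (exp (-θ * s) * M ^ d) := by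
  have hYij : ∀ j : G.neighborSet i, Measurable fun ω => Y ω i j := fun j =>
    (measurable_pi_apply _).comp ((measurable_pi_apply _).comp hYmeas)
  have hindepX : iIndepFun (fun (j : G.neighborSet i) ω => weibullExcess α B (Y ω i j)) P := by
    have := (hindep.precomp (neighborEdge_injective G i)).comp (fun _ => weibullExcess α B)
      (fun _ => measurable_weibullExcess α B)
    simpa only [Function.comp_def, apply_neighborEdge G (hYsymm _)] using this
  have hmeas : AEStronglyMeasurable (fun x => exp (θ * weibullExcess α B x)) ν := by
    fun_prop
  have hintX : ∀ j : G.neighborSet i,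
      Integrable (fun ω => exp (θ * weibullExcess α B (Y ω i j))) P := fun j => by
    have h : Integrable (fun x => exp (θ * weibullExcess α B x)) (P.map fun ω => Y ω i j) := by
      rw [hlaw i j j.2]; exact hint
    exact (integrable_map_measure (by rw [hlaw i j j.2]; exact hmeas) (hYij j).aemeasurable).1 h
  have hmgfX : ∀ j : G.neighborSet i, mgf (fun ω => weibullExcess α B (Y ω i j)) P θ ≤ M :=
    fun j => by
      rw [← Function.comp_def, ← mgf_map (hYij j).aemeasurable (hlaw i j j.2 ▸ hmeas), hlaw i j j.2]
      exact hmgf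
  rw [← ofReal_measureReal]
  gcongr
  refine (measureReal_sum_ge_le_exp_mul_pow (fun j => (measurable_weibullExcess α B).comp (hYij j))
    hindepX hθ hintX hmgfX s).trans ?_
  gcongr
  exact hdeg.card_neighborSet_le G i

theorem measure_lam1_weightedAdj_ge_le (hdeg : MaxDegLE G d) (hYmeas : Measurable Y)
    (hYsymm : ∀ ω i j, Y ω i j = Y ω j i) {C₁ C₂ : ℝ} {μ : Measure ℝ}
    (hμ : IsWeibull α C₁ C₂ μ) (hα : 0 < α) (hα1 : α ≤ 1) (hC₁ : 0 < C₁) (hC₂ : 0 ≤ C₂)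
    (hB : 1 ≤ B) (hlaw : ∀ i j, G.Adj i j → P.map (fun ω => Y ω i j) = μ[|{x | B ^ (1 / α) < |x|}])
    (hindep : iIndepFun (fun (e : {p : Fin m × Fin m // p.1 < p.2 ∧ G.Adj p.1 p.2}) ω =>
      Y ω e.1.1 e.1.2) P)
    (hθ0 : 0 ≤ θ) (hθ1 : θ < 1) {t : ℝ} (ht : 0 < t) :
    P {ω | t ≤ lam1 (weightedAdj G (Y ω))} ≤ m * ENNReal.ofReal
      (exp (-θ * (t ^ α - d * B)) * (1 + 2 * C₂ * exp 1 / C₁ * θ / (1 - θ)) ^ d) := by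
  classical
  have := hμ.1
  have := cond_isProbabilityMeasure (hμ.measure_lt_abs_ne_zero hα hα1 hC₁ (by linarith : 0 ≤ B))
  have hK : 0 ≤ 2 * C₂ * exp 1 / C₁ := by positivity
  obtain ⟨hint, hmgf⟩ := mgf_le_of_measure_ge_le_exp (measurable_weibullExcess α B)
    (fun x => le_max_right _ _) hK (fun s hs => hμ.cond_weibullExcess_ge_le hα hα1 hC₁ hC₂ hB hs)
    hθ0 hθ1
  have hM : 1 ≤ 1 + 2 * C₂ * exp 1 / C₁ * θ / (1 - θ) :=
    le_add_of_nonneg_right (div_nonneg (mul_nonneg hK hθ0) (by linarith))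
  calc P {ω | t ≤ lam1 (weightedAdj G (Y ω))}
      ≤ P (⋃ i, {ω | t ^ α - d * B ≤ ∑ j : G.neighborSet i, weibullExcess α B (Y ω i j)}) :=
        measure_mono fun ω hω => mem_iUnion.2
          (exists_le_sum_weibullExcess G hdeg (Y ω) hα hα1 (by linarith) ht hω)
    _ ≤ ∑ i, P {ω | t ^ α - d * B ≤ ∑ j : G.neighborSet i, weibullExcess α B (Y ω i j)} :=
        measure_iUnion_fintype_le _ _
    _ ≤ ∑ _i : Fin m, ENNReal.ofReal
          (exp (-θ * (t ^ α - d * B)) * (1 + 2 * C₂ * exp 1 / C₁ * θ / (1 - θ)) ^ d) :=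
        Finset.sum_le_sum fun i _ => measure_sum_weibullExcess_ge_le G hdeg hYmeas hYsymm hlaw
          hindep hθ0 hint hmgf hM _ i
    _ = _ := by rw [Finset.sum_const, Finset.card_univ, Fintype.card_fin, nsmul_eq_mul]

end TreeNetwork

section Gap

variable {α d K L B A w : ℝ}

lemma rpow_add_rpow_eq_mul_one_add_rpow (hα : α ≠ 0) (hL : 0 < L) (hA : 0 ≤ A) :
    (L ^ (1 / α) + A ^ (1 / α)) ^ α = L * (1 + (A / L) ^ (1 / α)) ^ α := by
  have hLα : 0 < L ^ (1 / α) := by positivity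
  rw [show L ^ (1 / α) + A ^ (1 / α) = L ^ (1 / α) * (1 + (A / L) ^ (1 / α)) by
    rw [div_rpow hA hL.le]; field_simp, mul_rpow hLα.le (by positivity), ← rpow_mul hL.le,
    one_div_mul_cancel hα, rpow_one]

lemma mul_sqrt_le_rpow_one_div {q r : ℝ} (hα : 0 < α) (hα1 : α ≤ 1) (hw : 1 ≤ w) (hq : 0 ≤ q)
    (h : w * q ^ (α / 2) ≤ r) : w * √q ≤ r ^ (1 / α) := by
  have hww : w ≤ w ^ (1 / α) := by
    have h1α : (1 : ℝ) ≤ 1 / α := by rw [le_div_iff₀ hα]; linarith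
    simpa using rpow_le_rpow_of_exponent_le hw h1α
  calc w * √q ≤ w ^ (1 / α) * q ^ (α / 2 * (1 / α)) := by
        rw [show α / 2 * (1 / α) = 1 / 2 by field_simp, ← sqrt_eq_rpow]; gcongr
    _ = (w * q ^ (α / 2)) ^ (1 / α) := by
        rw [mul_rpow (by positivity) (by positivity), ← rpow_mul hq]
    _ ≤ r ^ (1 / α) := rpow_le_rpow (by positivity) h (by positivity)

lemma le_rpow_add_rpow_of_le_two_mul (hα : 0 < α) (hα1 : α ≤ 1) (hd : 0 ≤ d) (hL : 1 ≤ L)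
    (hB : 1 ≤ B) (hBK : B ≤ K * L) (hw1 : 1 ≤ w) (hw : d * √K + 3 ≤ α / (1 + 2 ^ (1 / α)) * w)
    (hA : w * (B / L) ^ (α / 2) ≤ A / L) (hAL : A ≤ 2 * L) :
    L + √L / 4 + d * B + A / L ≤ (L ^ (1 / α) + A ^ (1 / α)) ^ α := by
  have hL0 : 0 < L := by linarith
  have hr0 : 0 ≤ A / L := le_trans (by positivity) hA
  have hA0 : 0 ≤ A := by simpa using (le_div_iff₀ hL0).1 hr0
  have hr2 : A / L ≤ 2 := (div_le_iff₀ hL0).2 (by linarith)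
  have hchord := div_one_add_mul_le_one_add_rpow_sub_one hα.le hα1
    (by positivity : 0 ≤ (A / L) ^ (1 / α)) (rpow_le_rpow hr0 hr2 (by positivity))
  have hroot := mul_sqrt_le_rpow_one_div hα hα1 hw1 (by positivity) hA
  -- the chord bound gives a gain of at least `(d √K + 3) √(L B)` over `L`, which absorbs
  -- `d B ≤ d √K √(L B)`, `A / L ≤ 2` and `√L / 4`
  have hsB : 1 ≤ √B := one_le_sqrt.2 hB
  have hsL : 1 ≤ √L := one_le_sqrt.2 hL
  have hBL : √B ≤ √K * √L := by
    rw [← sqrt_mul' _ hL0.le]; exact sqrt_le_sqrt hBK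
  have hLq : L * √(B / L) = √L * √B := by
    rw [sqrt_div' _ hL0.le]; field_simp; rw [sq_sqrt hL0.le]
  have hdB : d * B ≤ d * √K * (√L * √B) := by
    calc d * B = d * (√B * √B) := by rw [mul_self_sqrt (by linarith)]
      _ ≤ d * (√K * √L * √B) := by gcongr
      _ = _ := by ring
  have hgain : (d * √K + 3) * (√L * √B) ≤ L * ((1 + (A / L) ^ (1 / α)) ^ α - 1) := by
    calc (d * √K + 3) * (√L * √B) ≤ α / (1 + 2 ^ (1 / α)) * w * (L * √(B / L)) := by
          rw [hLq]; gcongr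
      _ = L * (α / (1 + 2 ^ (1 / α)) * (w * √(B / L))) := by ring
      _ ≤ L * ((1 + (A / L) ^ (1 / α)) ^ α - 1) := by gcongr; exact hchord.trans' (by gcongr)
  rw [rpow_add_rpow_eq_mul_one_add_rpow hα.ne' hL0 hA0]
  nlinarith [mul_le_mul hsL hsB zero_le_one (by linarith)]

lemma le_rpow_add_rpow_of_two_mul_lt (hα : 0 < α) (hα1 : α ≤ 1) (hd : 0 ≤ d) (hK : 1 ≤ K)
    (hL : 4 ≤ L) (hB : 0 ≤ B) (hBK : B ≤ K * L) (hw : 8 * d * K ≤ w)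
    (hA : w * (B / L) ^ (α / 2) ≤ A / L) (hAL : 2 * L < A) :
    L + √L / 4 + d * B + A / L ≤ (L ^ (1 / α) + A ^ (1 / α)) ^ α := by
  have hL0 : 0 < L := by linarith
  have hA0 : 0 < A := by linarith
  have hWA : A ≤ (L ^ (1 / α) + A ^ (1 / α)) ^ α := by
    calc A = (A ^ (1 / α)) ^ α := by rw [← rpow_mul hA0.le, one_div_mul_cancel hα.ne', rpow_one]
      _ ≤ _ := rpow_le_rpow (by positivity) (le_add_of_nonneg_left (rpow_nonneg hL0.le _)) hα.le
  have hq : B / L ≤ K * (B / L) ^ (α / 2) := by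
    rcases le_total (B / L) 1 with h | h
    · calc B / L = (B / L) ^ (1 : ℝ) := (rpow_one _).symm
        _ ≤ (B / L) ^ (α / 2) :=
          rpow_le_rpow_of_exponent_ge' (by positivity) h (by positivity) (by linarith)
        _ ≤ K * (B / L) ^ (α / 2) := le_mul_of_one_le_left (by positivity) hK
    · calc B / L ≤ K := (div_le_iff₀ hL0).2 hBK
        _ ≤ K * (B / L) ^ (α / 2) :=
          le_mul_of_one_le_right (by linarith) (one_le_rpow h (by positivity))
  have hdB : d * B ≤ A / 8 := by
    have h1 : d * (B / L) ≤ w / 8 * (B / L) ^ (α / 2) := by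
      calc d * (B / L) ≤ d * (K * (B / L) ^ (α / 2)) := by gcongr
        _ = d * K * (B / L) ^ (α / 2) := by ring
        _ ≤ w / 8 * (B / L) ^ (α / 2) := by gcongr; linarith
    have h2 := mul_le_mul_of_nonneg_right (h1.trans (by linarith : _ ≤ A / L / 8)) hL0.le
    field_simp at h2
    linarith
  have hsqrt : √L ≤ L := by nlinarith [sq_sqrt hL0.le, one_le_sqrt.2 (by linarith : 1 ≤ L)]
  have hAL4 : A / L ≤ A / 4 := div_le_div_of_nonneg_left hA0.le (by norm_num) hL
  linarith

lemma add_sqrt_div_four_sub_one_le (hα : 0 < α) (hα1 : α ≤ 1) (hd : 0 ≤ d) (hK : 1 ≤ K)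
    (hL : 4 ≤ L) (hB : 1 ≤ B) (hBK : B ≤ K * L) (hw1 : 1 ≤ w) (hwd : 8 * d * K ≤ w)
    (hw : d * √K + 3 ≤ α / (1 + 2 ^ (1 / α)) * w) (hA : w * (B / L) ^ (α / 2) ≤ A / L) :
    L + √L / 4 - 1 ≤ (1 - 1 / L) * ((L ^ (1 / α) + A ^ (1 / α)) ^ α - d * B) := by
  have hL0 : 0 < L := by linarith
  have hr0 : 0 ≤ A / L := le_trans (by positivity) hA
  have hA0 : 0 ≤ A := by simpa using (le_div_iff₀ hL0).1 hr0
  have hgap : L + √L / 4 + d * B + A / L ≤ (L ^ (1 / α) + A ^ (1 / α)) ^ α := by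
    rcases le_or_gt A (2 * L) with h | h
    · exact le_rpow_add_rpow_of_le_two_mul hα hα1 hd (by linarith) hB hBK hw1 hw hA h
    · exact le_rpow_add_rpow_of_two_mul_lt hα hα1 hd hK hL (by linarith) hBK hwd hA h
  have hsub : (L ^ (1 / α) + A ^ (1 / α)) ^ α ≤ L + A := by
    refine (rpow_add_le_add_rpow (by positivity) (by positivity) hα.le hα1).trans_eq ?_
    rw [← rpow_mul hL0.le, ← rpow_mul hA0, one_div_mul_cancel hα.ne', rpow_one, rpow_one]
  have hloss : ((L ^ (1 / α) + A ^ (1 / α)) ^ α - d * B) / L ≤ 1 + A / L := by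
    rw [div_le_iff₀ hL0, add_mul, div_mul_cancel₀ _ hL0.ne']
    nlinarith
  rw [sub_mul, one_mul, one_div_mul_eq_div]
  linarith

end Gap

section Asymptotics

variable {a b : ℕ → ℝ}

lemma eventually_one_le_of_tendsto_div_log_log
    (hb : Tendsto (fun n => b n / log (log n)) atTop atTop) : ∀ᶠ n : ℕ in atTop, 1 ≤ b n := by
  have hLL : Tendsto (fun n : ℕ => log (log n)) atTop atTop :=
    tendsto_log_atTop.comp (tendsto_log_atTop.comp tendsto_natCast_atTop_atTop)
  filter_upwards [hb.eventually_ge_atTop 1, hLL.eventually_ge_atTop 1] with n h1 h2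
  rw [le_div_iff₀ (by linarith), one_mul] at h1
  linarith

lemma eventually_add_sqrt_div_four_sub_one_le {α : ℝ} (hα : 0 < α) (hα1 : α ≤ 1) (d : ℕ)
    (hbtop : Tendsto (fun n => b n / log (log n)) atTop atTop)
    (hbO : ∃ K : ℝ, ∀ᶠ n in atTop, b n ≤ K * log n)
    (hatop : Tendsto (fun n => a n / (b n ^ (α / 2) * log n ^ (1 - α / 2))) atTop atTop) :
    ∀ᶠ n : ℕ in atTop, log n + √(log n) / 4 - 1 ≤
      (1 - 1 / log n) * ((log n ^ (1 / α) + a n ^ (1 / α)) ^ α - d * b n) := by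
  obtain ⟨K, hK⟩ := hbO
  have hL : Tendsto (fun n : ℕ => log n) atTop atTop :=
    tendsto_log_atTop.comp tendsto_natCast_atTop_atTop
  filter_upwards [eventually_one_le_of_tendsto_div_log_log hbtop, hK, hL.eventually_ge_atTop 4,
    hatop.eventually_ge_atTop 1, hatop.eventually_ge_atTop (8 * d * max K 1),
    (hatop.const_mul_atTop (by positivity : 0 < α / (1 + 2 ^ (1 / α)))).eventually_ge_atTop
      (d * √(max K 1) + 3)] with n hb1 hbK hL4 hw1 hwd hw
  have hL0 : 0 < log n := by linarith
  refine add_sqrt_div_four_sub_one_le hα hα1 (Nat.cast_nonneg d) (le_max_right K 1) hL4 hb1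
    (hbK.trans (by gcongr; exact le_max_left K 1)) hw1 hwd hw (le_of_eq ?_)
  -- `b ^ (α / 2) * L ^ (1 - α / 2) = L * (b / L) ^ (α / 2)`
  rw [div_rpow (by linarith) hL0.le, rpow_sub hL0, rpow_one]
  field_simp

lemma tendsto_natCast_mul_exp_neg_mul_pow {α c K : ℝ} (hα : 0 < α) (hα1 : α ≤ 1) (hc : 0 ≤ c)
    (hK : 0 ≤ K) (d : ℕ) {v : ℕ → ℕ} (hv : ∀ᶠ n in atTop, (v n : ℝ) ≤ c * log n / b n)
    (hbtop : Tendsto (fun n => b n / log (log n)) atTop atTop)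
    (hbO : ∃ K : ℝ, ∀ᶠ n in atTop, b n ≤ K * log n)
    (hatop : Tendsto (fun n => a n / (b n ^ (α / 2) * log n ^ (1 - α / 2))) atTop atTop) :
    Tendsto (fun n : ℕ => n * v n *
      (exp (-(1 - 1 / log n) * ((log n ^ (1 / α) + a n ^ (1 / α)) ^ α - d * b n)) *
        (1 + K * (1 - 1 / log n) / (1 - (1 - 1 / log n))) ^ d)) atTop (nhds 0) := by
  have hL : Tendsto (fun n : ℕ => log n) atTop atTop :=
    tendsto_log_atTop.comp tendsto_natCast_atTop_atTop
  have hlim := ((tendsto_mul_one_add_mul_pow_mul_exp_neg_sqrt hK d).comp hL).const_mul (c * exp 1)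
  rw [mul_zero] at hlim
  have hM : ∀ᶠ n : ℕ in atTop, 0 ≤ K * (1 - 1 / log n) / (1 - (1 - 1 / log n)) ∧
      K * (1 - 1 / log n) / (1 - (1 - 1 / log n)) ≤ K * log n := by
    filter_upwards [hL.eventually_ge_atTop 1] with n hL1
    have hL0 : 0 < log n := by linarith
    rw [sub_sub_cancel, div_div_eq_mul_div, div_one, mul_assoc, sub_mul, one_div_mul_cancel hL0.ne',
      one_mul]
    exact ⟨by nlinarith, by nlinarith⟩
  refine squeeze_zero' (hM.mono fun n ⟨hM0, _⟩ => by positivity) ?_ hlim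
  filter_upwards [eventually_add_sqrt_div_four_sub_one_le hα hα1 d hbtop hbO hatop, hv, hM,
    eventually_one_le_of_tendsto_div_log_log hbtop, eventually_ge_atTop 1]
    with n hexp hvn ⟨hM0, hMle⟩ hb1 hn
  have hn' : (n : ℝ) = exp (log n) := (exp_log (by exact_mod_cast hn)).symm
  have hvL : (v n : ℝ) ≤ c * log n := hvn.trans (div_le_self (by positivity) hb1)
  calc (n : ℝ) * v n *
        (exp (-(1 - 1 / log n) * ((log n ^ (1 / α) + a n ^ (1 / α)) ^ α - d * b n)) *
          (1 + K * (1 - 1 / log n) / (1 - (1 - 1 / log n))) ^ d)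
      ≤ exp (log n) * (c * log n) * (exp (-(log n + √(log n) / 4 - 1)) * (1 + K * log n) ^ d) := by
        rw [← hn']
        gcongr
        linarith
    _ = (c * exp 1) * (log n * (1 + K * log n) ^ d * exp (-(√(log n) / 4))) := by
        rw [show -(log n + √(log n) / 4 - 1) = -log n + 1 + -(√(log n) / 4) by ring, exp_add,
          exp_add, exp_neg]
        field_simp

end Asymptotics

theorem tree_network_largest_eigenvalue_heavy_general
    (α : ℝ) (hα : 0 < α) (hα1 : α ≤ 1)
    (c : ℝ) (hc : 0 < c) (d : ℕ)
    (C₁ C₂ : ℝ) (hC₁ : 0 < C₁) (hC₂ : 0 < C₂)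
    (b : ℕ → ℝ)
    (hbtop : Tendsto (fun n => b n / Real.log (Real.log n)) atTop atTop)
    (hbO : ∃ K : ℝ, ∀ᶠ n in atTop, b n ≤ K * Real.log n)
    (a : ℕ → ℝ) (hapos : ∀ n, 0 < a n)
    (v : ℕ → ℕ) (T : ∀ n, SimpleGraph (Fin (v n)))
    (hTdeg : ∀ n, MaxDegLE (T n) d)
    (hVsize : ∀ᶠ n in atTop, (v n : ℝ) ≤ c * Real.log n / b n)
    (Ω : ℕ → Type*) [∀ n, MeasurableSpace (Ω n)]
    (P : ∀ n, Measure (Ω n)) [∀ n, IsProbabilityMeasure (P n)]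
    (Y : ∀ n, Ω n → Fin (v n) → Fin (v n) → ℝ)
    (hYmeas : ∀ n, Measurable (Y n))
    (hYsymm : ∀ n ω i j, Y n ω i j = Y n ω j i)
    (μ : ℕ → Measure ℝ) (hμ : ∀ n, IsWeibull α C₁ C₂ (μ n))
    (hYlaw : ∀ n, ∀ i j : Fin (v n), (T n).Adj i j →
      Measure.map (fun ω => Y n ω i j) (P n) =
        ProbabilityTheory.cond (μ n) {x : ℝ | b n ^ (1 / α) < |x|})
    (hYindep : ∀ n, iIndepFun
      (fun (e : {p : Fin (v n) × Fin (v n) // p.1 < p.2 ∧ (T n).Adj p.1 p.2})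
        (ω : Ω n) => Y n ω e.1.1 e.1.2) (P n))
    (hatop : Tendsto
      (fun n => a n / (b n ^ (α / 2) * Real.log n ^ (1 - α / 2)))
      atTop atTop) :
    Tendsto
      (fun n : ℕ => ((n : ℕ) : ℝ≥0∞) *
        P n {ω | Real.log n ^ (1 / α) + a n ^ (1 / α) ≤
          lam1 (weightedAdj (T n) (Y n ω))})
      atTop (nhds 0) := by
  have hL : Tendsto (fun n : ℕ => log n) atTop atTop :=
    tendsto_log_atTop.comp tendsto_natCast_atTop_atTop
  have hbound : ∀ᶠ n : ℕ in atTop, (n : ℝ≥0∞) * P n {ω | log n ^ (1 / α) + a n ^ (1 / α) ≤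
      lam1 (weightedAdj (T n) (Y n ω))} ≤ ENNReal.ofReal (n * v n *
        (exp (-(1 - 1 / log n) * ((log n ^ (1 / α) + a n ^ (1 / α)) ^ α - d * b n)) *
          (1 + 2 * C₂ * exp 1 / C₁ * (1 - 1 / log n) / (1 - (1 - 1 / log n))) ^ d)) := by
    filter_upwards [eventually_one_le_of_tendsto_div_log_log hbtop, hL.eventually_ge_atTop 1]
      with n hb1 hL1
    rw [ENNReal.ofReal_mul (by positivity), ENNReal.ofReal_mul (by positivity),
      ENNReal.ofReal_natCast, ENNReal.ofReal_natCast, mul_assoc]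
    gcongr
    exact measure_lam1_weightedAdj_ge_le (T n) (hTdeg n) (hYmeas n) (hYsymm n) (hμ n) hα hα1 hC₁
      hC₂.le hb1 (hYlaw n) (hYindep n) (sub_nonneg.2 ((div_le_one (by linarith)).2 hL1))
      (sub_lt_self _ (by positivity)) (by have := hapos n; positivity)
  have hlim := ENNReal.tendsto_ofReal (tendsto_natCast_mul_exp_neg_mul_pow hα hα1 hc.le
    (by positivity : 0 ≤ 2 * C₂ * exp 1 / C₁) d hVsize hbtop hbO hatop)
  rw [ENNReal.ofReal_zero] at hlim
  exact tendsto_of_tendsto_of_tendsto_of_le_of_le' tendsto_const_nhds hlim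
    (Eventually.of_forall fun _ => zero_le) hbound

/-- **Largest eigenvalue of random tree-networks with bounded degree, case `0 < α ≤ 1`.** -/
theorem tree_network_largest_eigenvalue_heavy
    (α : ℝ) (hα : 0 < α) (hα1 : α ≤ 1)
    (c : ℝ) (hc : 0 < c) (d : ℕ) (hd : 3 ≤ d)
    (C₁ C₂ : ℝ) (hC₁ : 0 < C₁) (hC₂ : 0 < C₂)
    (b : ℕ → ℝ) (hbpos : ∀ n, 0 < b n)
    (hbtop : Tendsto (fun n => b n / Real.log (Real.log n)) atTop atTop)
    (hbO : ∃ K : ℝ, ∀ᶠ n in atTop, b n ≤ K * Real.log n)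
    (a : ℕ → ℝ) (hapos : ∀ n, 0 < a n)
    (v : ℕ → ℕ) (T : ∀ n, SimpleGraph (Fin (v n)))
    (hT : ∀ n, (T n).IsTree) (hTdeg : ∀ n, MaxDegLE (T n) d)
    (hVsize : ∀ᶠ n in atTop, (v n : ℝ) ≤ c * Real.log n / b n)
    (Ω : ℕ → Type*) [∀ n, MeasurableSpace (Ω n)]
    (P : ∀ n, Measure (Ω n)) [∀ n, IsProbabilityMeasure (P n)]
    (Y : ∀ n, Ω n → Fin (v n) → Fin (v n) → ℝ)
    (hYmeas : ∀ n, Measurable (Y n))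
    (hYsymm : ∀ n ω i j, Y n ω i j = Y n ω j i)
    (μ : ℕ → Measure ℝ) (hμ : ∀ n, IsWeibull α C₁ C₂ (μ n))
    (hYlaw : ∀ n, ∀ i j : Fin (v n), (T n).Adj i j →
      Measure.map (fun ω => Y n ω i j) (P n) =
        ProbabilityTheory.cond (μ n) {x : ℝ | b n ^ (1 / α) < |x|})
    (hYindep : ∀ n, iIndepFun
      (fun (e : {p : Fin (v n) × Fin (v n) // p.1 < p.2 ∧ (T n).Adj p.1 p.2})
        (ω : Ω n) => Y n ω e.1.1 e.1.2) (P n))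
    (hatop : Tendsto
      (fun n => a n / (b n ^ (α / 2) * Real.log n ^ (1 - α / 2)))
      atTop atTop) :
    Tendsto
      (fun n : ℕ => ((n : ℕ) : ℝ≥0∞) *
        P n {ω | Real.log n ^ (1 / α) + a n ^ (1 / α) ≤
          lam1 (weightedAdj (T n) (Y n ω))})
      atTop (nhds 0) :=
  tree_network_largest_eigenvalue_heavy_general α hα hα1 c hc d C₁ C₂ hC₁ hC₂ b hbtop hbO a hapos v
    T hTdeg hVsize Ω P Y hYmeas hYsymm μ hμ hYlaw hYindep hatop
end
end
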